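/- The bulk equation H1, Q(u00,u10,u01,u11;a,b) = (u00−u11)(u10−u01) + b − a, together with the boundary equation q(x,y,z;a) = y(z−x) + a − μ and the parameter map σ(a) = −a + 2μ (where μ is a fixed complex parameter), satisfies the 3D boundary consistency condition. -/

import Mathlib

/-- The bulk quad-graph equation. -/
noncomputable def Qbulk (u00 u10 u01 u11 a b : ℂ) : ℂ :=
  (u00 - u11) * (u10 - u01) + b - a

/-- The boundary equation. -/
noncomputable def qBdry (mu : ℂ) (x y z a : ℂ) : ℂ :=
  y * (z - x) + a - mu

/-- The parameter map acting on edge labels. -/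
noncomputable def sigmaMap (mu : ℂ) (a : ℂ) : ℂ :=
  -a + 2 * mu

/-!
With `A = μ - a` and `B = μ - b` every equation of the scheme says that a coefficient times an
increment of the fields is one of `A`, `B`, `A + B`, `A - B`. Eliminating along the cube with
`P = B x₁ - A x₂` and `R = B x₂ - A x₁` gives `P z₁ = x₂ R` and `P z₂ = x₁ R`, and then each of
`w₁, w₂, w₃` satisfies `R (w - x) = B² - A²`. The nondegeneracy conditions make `P`, hence `R`,
nonzero, so the three values coincide.
-/

theorem qBdry_one_sub_qBdry_zero (mu x y a : ℂ) : qBdry mu x y 1 a - qBdry mu x y 0 a = y := by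
  unfold qBdry; ring

theorem Qbulk_one_sub_Qbulk_zero_u00 (u10 u01 u11 a b : ℂ) :
    Qbulk 1 u10 u01 u11 a b - Qbulk 0 u10 u01 u11 a b = u10 - u01 := by
  unfold Qbulk; ring

theorem Qbulk_one_sub_Qbulk_zero_u10 (u00 u01 u11 a b : ℂ) :
    Qbulk u00 1 u01 u11 a b - Qbulk u00 0 u01 u11 a b = u00 - u11 := by
  unfold Qbulk; ring

namespace H1Boundary

variable {K : Type*} [CommRing K]

theorem mul_mul_sub_of_two_steps {s t c d P R u v w : K} (huv : s * (v - u) = c)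
    (hvw : t * (w - v) = d) (hst : P * t = s * R) :
    s * R * (w - u) = c * R + d * P := by
  linear_combination R * huv + P * hvw - (w - v) * hst

theorem mul_eq_of_mul_sub_eq {A B x1 x2 s y z : K}
    (hy : s * (x2 - x1) * y = B * x1 - A * x2) (hz : y * (z - s) = A + B) :
    (B * x1 - A * x2) * z = s * (B * x2 - A * x1) := by
  linear_combination (s - z) * hy + s * (x2 - x1) * hz

theorem eq_and_eq_of_normal_form [IsDomain K] {A B x x1 x2 y1 y2 y3 z1 z2 w1 w2 w3 : K}
    (h1 : (x2 - x1) * (y1 - x) = B - A) (h2 : x1 * (y2 - x) = A) (h3 : x2 * (y3 - x) = B)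
    (h4 : (y1 - y3) * (z1 - x2) = A + B) (h5 : (y1 - y2) * (z2 - x1) = A + B)
    (h6 : z2 * (w1 - y2) = B) (h7 : z1 * (w2 - y3) = A) (h8 : (z1 - z2) * (w3 - y1) = A - B)
    (hx : x2 - x1 ≠ 0) (hx1 : x1 ≠ 0) (hx2 : x2 ≠ 0) (hy : y1 - y2 ≠ 0) (hz : z2 ≠ 0) :
    w1 = w2 ∧ w2 = w3 := by
  have hy2 : x1 * (x2 - x1) * (y1 - y2) = B * x1 - A * x2 := by
    linear_combination x1 * h1 - (x2 - x1) * h2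
  have hy3 : x2 * (x2 - x1) * (y1 - y3) = B * x1 - A * x2 := by
    linear_combination x2 * h1 - (x2 - x1) * h3
  have hz1 := mul_eq_of_mul_sub_eq hy3 h4
  have hz2 := mul_eq_of_mul_sub_eq hy2 h5
  have hz12 : (B * x1 - A * x2) * (z1 - z2) = (x2 - x1) * (B * x2 - A * x1) := by
    linear_combination hz1 - hz2
  have hP : B * x1 - A * x2 ≠ 0 := hy2 ▸ mul_ne_zero (mul_ne_zero hx1 hx) hy
  have hR : B * x2 - A * x1 ≠ 0 := fun hR => mul_ne_zero hP hz (by rw [hz2, hR, mul_zero])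
  have hw1 : (B * x2 - A * x1) * (w1 - x) = B ^ 2 - A ^ 2 := mul_left_cancel₀ hx1 <| by
    linear_combination mul_mul_sub_of_two_steps h2 h6 hz2
  have hw2 : (B * x2 - A * x1) * (w2 - x) = B ^ 2 - A ^ 2 := mul_left_cancel₀ hx2 <| by
    linear_combination mul_mul_sub_of_two_steps h3 h7 hz1
  have hw3 : (B * x2 - A * x1) * (w3 - x) = B ^ 2 - A ^ 2 := mul_left_cancel₀ hx <| by
    linear_combination mul_mul_sub_of_two_steps h1 h8 hz12
  exact ⟨sub_left_inj.mp (mul_left_cancel₀ hR (hw1.trans hw2.symm)),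
    sub_left_inj.mp (mul_left_cancel₀ hR (hw2.trans hw3.symm))⟩

end H1Boundary

theorem boundary_consistency_stmt_8_general
    (mu : ℂ) (a b : ℂ) 
    (x x1 x2 y1 y2 y3 z1 z2 w1 w2 w3 : ℂ)
    -- the eight equations of the scheme
    (e1 : Qbulk y1 x2 x1 x a b = 0)
    (e2 : qBdry mu x x1 y2 a = 0)
    (e3 : qBdry mu x x2 y3 b = 0)
    (e4 : Qbulk y1 z1 x2 y3 (sigmaMap mu b) a = 0)
    (e5 : Qbulk y1 z2 x1 y2 (sigmaMap mu a) b = 0)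
    (e6 : qBdry mu y2 z2 w1 b = 0)
    (e7 : qBdry mu y3 z1 w2 a = 0)
    (e8 : Qbulk y1 z1 z2 w3 (sigmaMap mu b) (sigmaMap mu a) = 0)
    -- nonvanishing of the coefficient of the determined variable in each
    -- affine-linear equation (coefficient = value at 1 minus value at 0)
    (c1 : Qbulk 1 x2 x1 x a b - Qbulk 0 x2 x1 x a b ≠ 0)
    (c2 : qBdry mu x x1 1 a - qBdry mu x x1 0 a ≠ 0)
    (c3 : qBdry mu x x2 1 b - qBdry mu x x2 0 b ≠ 0)
    (c5 : Qbulk y1 1 x1 y2 (sigmaMap mu a) b - Qbulk y1 0 x1 y2 (sigmaMap mu a) b ≠ 0)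
    (c6 : qBdry mu y2 z2 1 b - qBdry mu y2 z2 0 b ≠ 0) :
    w1 = w2 ∧ w2 = w3 := by
  rw [Qbulk_one_sub_Qbulk_zero_u00] at c1
  rw [Qbulk_one_sub_Qbulk_zero_u10] at c5
  rw [qBdry_one_sub_qBdry_zero] at c2 c3 c6
  simp only [Qbulk, qBdry, sigmaMap] at e1 e2 e3 e4 e5 e6 e7 e8
  exact H1Boundary.eq_and_eq_of_normal_form (A := mu - a) (B := mu - b) (x := x)
    (y3 := y3) (z1 := z1)
    (by linear_combination e1) (by linear_combination e2) (by linear_combination e3)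
    (by linear_combination e4) (by linear_combination e5) (by linear_combination e6)
    (by linear_combination e7) (by linear_combination -e8) c1 c2 c3 c5 c6

/-- 3D boundary consistency of the triple (Q, q, σ). -/
theorem boundary_consistency_stmt_8
    (mu : ℂ) (a b : ℂ) 
    (x x1 x2 y1 y2 y3 z1 z2 w1 w2 w3 : ℂ)
    -- the eight equations of the scheme
    (e1 : Qbulk y1 x2 x1 x a b = 0)
    (e2 : qBdry mu x x1 y2 a = 0)
    (e3 : qBdry mu x x2 y3 b = 0)
    (e4 : Qbulk y1 z1 x2 y3 (sigmaMap mu b) a = 0)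
    (e5 : Qbulk y1 z2 x1 y2 (sigmaMap mu a) b = 0)
    (e6 : qBdry mu y2 z2 w1 b = 0)
    (e7 : qBdry mu y3 z1 w2 a = 0)
    (e8 : Qbulk y1 z1 z2 w3 (sigmaMap mu b) (sigmaMap mu a) = 0)
    -- nonvanishing of the coefficient of the determined variable in each
    -- affine-linear equation (coefficient = value at 1 minus value at 0)
    (c1 : Qbulk 1 x2 x1 x a b - Qbulk 0 x2 x1 x a b ≠ 0)
    (c2 : qBdry mu x x1 1 a - qBdry mu x x1 0 a ≠ 0)
    (c3 : qBdry mu x x2 1 b - qBdry mu x x2 0 b ≠ 0)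
    (c4 : Qbulk y1 1 x2 y3 (sigmaMap mu b) a - Qbulk y1 0 x2 y3 (sigmaMap mu b) a ≠ 0)
    (c5 : Qbulk y1 1 x1 y2 (sigmaMap mu a) b - Qbulk y1 0 x1 y2 (sigmaMap mu a) b ≠ 0)
    (c6 : qBdry mu y2 z2 1 b - qBdry mu y2 z2 0 b ≠ 0)
    (c7 : qBdry mu y3 z1 1 a - qBdry mu y3 z1 0 a ≠ 0)
    (c8 : Qbulk y1 z1 z2 1 (sigmaMap mu b) (sigmaMap mu a) - Qbulk y1 z1 z2 0 (sigmaMap mu b) (sigmaMap mu a) ≠ 0) :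
    w1 = w2 ∧ w2 = w3 :=
  boundary_consistency_stmt_8_general mu a b x x1 x2 y1 y2 y3 z1 z2 w1 w2 w3 e1 e2 e3 e4 e5 e6 e7 e8
    c1 c2 c3 c5 c6
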